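/- arXiv:1002.2076 — 6 statements merged into one kernel-verified Lean document; each statement's English description precedes it below -/
import Mathlib

section
/- Riccati comparison: let G be continuous and v continuous and positive on [0,∞). Suppose q₁ is absolutely continuous on [t̄, T₁) and satisfies q₁'(t) − q₁(t)²/v(t) − G(t) ≥ 0 a.e., and q₂ is absolutely continuous on [t̄, T₂) and satisfies q₂'(t) − q₂(t)²/v(t) − G(t) ≤ 0 a.e., with q₁(t̄) = q₂(t̄) for some t̄ > 0 (and T₁, T₂ the maximal right endpoints of their intervals of definition). Then T₁ ≤ T₂ and q₁(t) ≥ q₂(t) for all t ∈ [t̄, T₁). -/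
open Real Set Filter MeasureTheory intervalIntegral Topology

/-!
The difference `w = q₁ - q₂` satisfies the *linear* inequality `w' ≥ c w` a.e., with the
continuous coefficient `c = (q₁ + q₂) / v`, because `q₁² - q₂² = (q₁ + q₂) w` and `G` cancels.
Hence `w · exp (-∫ c)` has an a.e. nonnegative derivative, so it is nondecreasing and `w ≥ 0`.
That last step needs the derivative to exist everywhere (Goldowsky–Tonelli): if `g` decreased on
`[a, b]`, every value in `(g b, g a)` would be taken at a point where `g' ≤ 0`, i.e. either in
the null set where `g' < 0` or in the critical set; both images are null, by the Lusin property
of differentiable maps and by Sard's lemma. Finally, if `T₂ < T₁` then `q₁ ≥ q₂ → ∞` at `T₂`,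
contradicting the continuity of `q₁` at `T₂`.
-/

theorem exists_eq_and_hasDerivWithinAt_nonpos {g g' : ℝ → ℝ} {a b y : ℝ} (hab : a ≤ b)
    (hg : ∀ x ∈ Icc a b, HasDerivWithinAt g (g' x) (Icc a b) x) (hy : y ∈ Ioo (g b) (g a)) :
    ∃ c ∈ Icc a b, g c = y ∧ g' c ≤ 0 := by
  have hcont : ContinuousOn g (Icc a b) := fun x hx => (hg x hx).continuousWithinAt
  set K := Icc a b ∩ g ⁻¹' Ici y
  have hK : IsCompact K := isCompact_Icc.of_isClosed_subset
    (hcont.preimage_isClosed_of_isClosed isClosed_Icc isClosed_Ici) inter_subset_left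
  obtain ⟨⟨hac, hcb⟩, hyc⟩ : sSup K ∈ K := hK.sSup_mem ⟨a, left_mem_Icc.2 hab, hy.2.le⟩
  set c := sSup K
  have hKc : ∀ x ∈ K, x ≤ c := fun x hx => le_csSup hK.bddAbove hx
  have hmax : IsMaxOn g (Icc c b) c := by
    intro x hx
    change g x ≤ g c
    by_contra! hcx
    exact hcx.ne' (congrArg g (le_antisymm (hKc x ⟨⟨hac.trans hx.1, hx.2⟩, hyc.trans hcx.le⟩) hx.1))
  have hcb' : c < b := hcb.lt_of_ne fun h => hy.1.not_ge (h ▸ hyc)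
  obtain ⟨x, hx, hgx⟩ := intermediate_value_Icc' hcb (hcont.mono (Icc_subset_Icc hac le_rfl))
    ⟨hy.1.le, hyc⟩
  have hxc : x = c := le_antisymm (hKc x ⟨⟨hac.trans hx.1, hx.2⟩, hgx.ge⟩) hx.1
  have hderiv : (b - c) * g' c ≤ 0 := by
    simpa using hmax.localize.hasFDerivWithinAt_nonpos
      ((hg c ⟨hac, hcb⟩).mono (Icc_subset_Icc hac le_rfl)).hasFDerivWithinAt
      (sub_mem_posTangentConeAt_of_segment_subset (segment_eq_Icc hcb).subset)
  exact ⟨c, ⟨hac, hcb⟩, hxc ▸ hgx, nonpos_of_mul_nonpos_right hderiv (sub_pos.2 hcb')⟩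

theorem le_of_hasDerivWithinAt_of_ae_nonneg {g g' : ℝ → ℝ} {a b : ℝ} (hab : a ≤ b)
    (hg : ∀ x ∈ Icc a b, HasDerivWithinAt g (g' x) (Icc a b) x)
    (hg' : ∀ᵐ x, x ∈ Icc a b → 0 ≤ g' x) : g a ≤ g b := by
  by_contra! hba
  set E := {x | ¬(x ∈ Icc a b → 0 ≤ g' x)}
  set Z := {x ∈ Icc a b | g' x = 0}
  have hE : volume (g '' E) = 0 := by
    refine addHaar_image_eq_zero_of_differentiableOn_of_addHaar_eq_zero volume
      (fun x hx => ?_) (ae_iff.1 hg')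
    exact (hg x (Classical.not_imp.1 hx).1).differentiableWithinAt.mono
      fun z hz => (Classical.not_imp.1 hz).1
  have hZ : volume (g '' Z) = 0 := by
    refine addHaar_image_eq_zero_of_det_fderivWithin_eq_zero volume
      (f' := fun x => (1 : ℝ →L[ℝ] ℝ).smulRight (g' x))
      (fun x hx => ((hg x hx.1).mono (sep_subset _ _)).hasFDerivWithinAt) fun x hx => ?_
    simp [hx.2]
  have hsub : Ioo (g b) (g a) ⊆ g '' E ∪ g '' Z := by
    intro y hy
    obtain ⟨c, hc, rfl, hc'⟩ := exists_eq_and_hasDerivWithinAt_nonpos hab hg hy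
    by_cases hcE : c ∈ E
    · exact Or.inl ⟨c, hcE, rfl⟩
    · exact Or.inr ⟨c, ⟨hc, le_antisymm hc' (not_not.1 hcE hc)⟩, rfl⟩
  have := measure_mono_null hsub (measure_union_null hE hZ)
  simp only [Real.volume_Ioo, ENNReal.ofReal_eq_zero, sub_nonpos] at this
  exact this.not_gt hba

theorem ContinuousOn.hasDerivWithinAt_integral_Icc {f : ℝ → ℝ} {a b x : ℝ}
    (hf : ContinuousOn f (Icc a b)) (hx : x ∈ Icc a b) :
    HasDerivWithinAt (fun u => ∫ y in a..u, f y) (f x) (Icc a b) x := by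
  have : Fact (x ∈ Icc a b) := ⟨hx⟩
  exact integral_hasDerivWithinAt_right
    ((hf.mono (Icc_subset_Icc le_rfl hx.2)).intervalIntegrable_of_Icc hx.1)
    (hf.stronglyMeasurableAtFilter_nhdsWithin measurableSet_Icc x) (hf x hx)

theorem nonneg_of_hasDerivWithinAt_of_ae_mul_le {w w' c : ℝ → ℝ} {a b : ℝ} (hab : a ≤ b)
    (hw : ∀ x ∈ Icc a b, HasDerivWithinAt w (w' x) (Icc a b) x) (hc : ContinuousOn c (Icc a b))
    (hw' : ∀ᵐ x, x ∈ Icc a b → c x * w x ≤ w' x) (hwa : 0 ≤ w a) : 0 ≤ w b := by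
  set C := fun u => ∫ y in a..u, c y
  have hmono : w a * exp (-C a) ≤ w b * exp (-C b) := by
    refine le_of_hasDerivWithinAt_of_ae_nonneg hab
      (fun x hx => (hw x hx).mul (hc.hasDerivWithinAt_integral_Icc hx).neg.exp) ?_
    filter_upwards [hw'] with x hx hxI
    change 0 ≤ w' x * exp (-C x) + w x * (exp (-C x) * -c x)
    linarith [mul_nonneg (exp_pos (-C x)).le (sub_nonneg.2 (hx hxI))]
  have hCa : C a = 0 := integral_same
  rw [hCa, neg_zero, exp_zero, mul_one] at hmono
  exact nonneg_of_mul_nonneg_left (hwa.trans hmono) (exp_pos _)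

theorem riccati_comparison_Icc {v G q₁ q₂ d₁ d₂ : ℝ → ℝ} {a b : ℝ} (hab : a ≤ b)
    (hv : ContinuousOn v (Icc a b)) (hvpos : ∀ t ∈ Icc a b, 0 < v t)
    (hq₁ : ∀ t ∈ Icc a b, HasDerivWithinAt q₁ (d₁ t) (Icc a b) t)
    (hq₂ : ∀ t ∈ Icc a b, HasDerivWithinAt q₂ (d₂ t) (Icc a b) t)
    (hineq₁ : ∀ᵐ t, t ∈ Icc a b → 0 ≤ d₁ t - q₁ t ^ 2 / v t - G t)
    (hineq₂ : ∀ᵐ t, t ∈ Icc a b → d₂ t - q₂ t ^ 2 / v t - G t ≤ 0)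
    (hinit : q₂ a ≤ q₁ a) : q₂ b ≤ q₁ b := by
  have hcont : ∀ {q d : ℝ → ℝ}, (∀ t ∈ Icc a b, HasDerivWithinAt q (d t) (Icc a b) t) →
      ContinuousOn q (Icc a b) := fun hq t ht => (hq t ht).continuousWithinAt
  have hw := nonneg_of_hasDerivWithinAt_of_ae_mul_le (w := fun t => q₁ t - q₂ t)
    (c := fun t => (q₁ t + q₂ t) / v t) hab
    (fun t ht => (hq₁ t ht).sub (hq₂ t ht))
    (((hcont hq₁).add (hcont hq₂)).div hv fun t ht => (hvpos t ht).ne') ?_ (sub_nonneg.2 hinit)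
  · exact sub_nonneg.1 hw
  filter_upwards [hineq₁, hineq₂] with t h₁ h₂ ht
  have hsq : (q₁ t + q₂ t) / v t * (q₁ t - q₂ t) = q₁ t ^ 2 / v t - q₂ t ^ 2 / v t := by ring
  linarith [h₁ ht, h₂ ht]

theorem stmt2_general (G v : ℝ → ℝ) (hv : ContinuousOn v (Ici 0))
    (hvpos : ∀ t ∈ Ici (0 : ℝ), 0 < v t)
    (tbar T₁ T₂ : ℝ) (htbar : 0 < tbar) (hT₂ : tbar < T₂)
    (q₁ q₂ d₁ d₂ : ℝ → ℝ)
    (hq₁ : ∀ t ∈ Ico tbar T₁, HasDerivAt q₁ (d₁ t) t)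
    (hq₂ : ∀ t ∈ Ico tbar T₂, HasDerivAt q₂ (d₂ t) t)
    (hineq₁ : ∀ᵐ t, t ∈ Ico tbar T₁ → d₁ t - (q₁ t) ^ 2 / v t - G t ≥ 0)
    (hineq₂ : ∀ᵐ t, t ∈ Ico tbar T₂ → d₂ t - (q₂ t) ^ 2 / v t - G t ≤ 0)
    (hmax₂ : Tendsto q₂ (nhdsWithin T₂ (Iio T₂)) atTop)
    (hinit : q₁ tbar = q₂ tbar) :
    T₁ ≤ T₂ ∧ ∀ t ∈ Ico tbar T₁, q₂ t ≤ q₁ t := by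
  have hcomp : ∀ t ∈ Ico tbar (min T₁ T₂), q₂ t ≤ q₁ t := by
    rintro t ⟨htbar_t, ht⟩
    have hmem : ∀ s ∈ Icc tbar t, s ∈ Ico tbar T₁ ∧ s ∈ Ico tbar T₂ := fun s hs =>
      ⟨⟨hs.1, hs.2.trans_lt (ht.trans_le (min_le_left _ _))⟩,
        ⟨hs.1, hs.2.trans_lt (ht.trans_le (min_le_right _ _))⟩⟩
    have hpos : ∀ s ∈ Icc tbar t, (0 : ℝ) ≤ s := fun s hs => htbar.le.trans hs.1
    refine riccati_comparison_Icc (G := G) htbar_t (hv.mono hpos)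
      (fun s hs => hvpos s (hpos s hs))
      (fun s hs => (hq₁ s (hmem s hs).1).hasDerivWithinAt)
      (fun s hs => (hq₂ s (hmem s hs).2).hasDerivWithinAt) ?_ ?_ hinit.ge
    · filter_upwards [hineq₁] with s h hs using h (hmem s hs).1
    · filter_upwards [hineq₂] with s h hs using h (hmem s hs).2
  have hT : T₁ ≤ T₂ := by
    by_contra! hlt
    have htop : Tendsto q₁ (𝓝[<] T₂) atTop := by
      refine tendsto_atTop_mono' _ ?_ hmax₂
      filter_upwards [Ioo_mem_nhdsLT hT₂] with t ht
      exact hcomp t ⟨ht.1.le, lt_min (ht.2.trans hlt) ht.2⟩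
    exact not_tendsto_atTop_of_tendsto_nhds
      ((hq₁ T₂ ⟨hT₂.le, hlt⟩).continuousAt.tendsto.mono_left nhdsWithin_le_nhds) htop
  exact ⟨hT, fun t ht => hcomp t ⟨ht.1, lt_min ht.2 (ht.2.trans_le hT)⟩⟩

/-- Riccati comparison: if `q₁` is a subsolution and `q₂` a supersolution of the Riccati
equation `q' = q²/v + G` on maximal intervals `[t̄, Tᵢ)` (maximality encoded by blow-up
to `+∞` at `Tᵢ`), with the same initial value at `t̄ > 0`, then `T₁ ≤ T₂` and
`q₁ ≥ q₂` on `[t̄, T₁)`. -/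
theorem stmt2 (G v : ℝ → ℝ) (hG : ContinuousOn G (Ici 0)) (hv : ContinuousOn v (Ici 0))
    (hvpos : ∀ t ∈ Ici (0 : ℝ), 0 < v t)
    (tbar T₁ T₂ : ℝ) (htbar : 0 < tbar) (hT₁ : tbar < T₁) (hT₂ : tbar < T₂)
    (q₁ q₂ d₁ d₂ : ℝ → ℝ)
    (hq₁ : ∀ t ∈ Ico tbar T₁, HasDerivAt q₁ (d₁ t) t)
    (hq₂ : ∀ t ∈ Ico tbar T₂, HasDerivAt q₂ (d₂ t) t)
    (hineq₁ : ∀ᵐ t, t ∈ Ico tbar T₁ → d₁ t - (q₁ t) ^ 2 / v t - G t ≥ 0)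
    (hineq₂ : ∀ᵐ t, t ∈ Ico tbar T₂ → d₂ t - (q₂ t) ^ 2 / v t - G t ≤ 0)
    (hmax₁ : Tendsto q₁ (nhdsWithin T₁ (Iio T₁)) atTop)
    (hmax₂ : Tendsto q₂ (nhdsWithin T₂ (Iio T₂)) atTop)
    (hinit : q₁ tbar = q₂ tbar) :
    T₁ ≤ T₂ ∧ ∀ t ∈ Ico tbar T₁, q₂ t ≤ q₁ t :=
  stmt2_general G v hv hvpos tbar T₁ T₂ htbar hT₂ q₁ q₂ d₁ d₂ hq₁ hq₂ hineq₁ hineq₂ hmax₂ hinit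
end

section
/- Let B > 0 and let h : (0,∞) → ℝ be a globally defined C¹ solution of h'(t) = h(t)² + K(t), where K : (0,∞) → ℝ satisfies K(t) ≥ −B². Then for all t > 0, −B(e^{2Bt}+1)/(e^{2Bt}−1) ≤ h(t) ≤ B. (In particular h is bounded above by B and bounded below by the explicit hyperbolic-cotangent-type barrier.) -/
/-!
Since `K ≥ -B²`, `h` is a supersolution of the Riccati equation `g' = g² - B²`, whose solutions
satisfy `(g - B) / (g + B) = C e^{2Bt}`. For a supersolution that lies above `B`, the quantity
`(h - B) / (h + B) e^{-2Bt}` is nondecreasing while staying below `e^{-2Bt}`, so such an `h`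
blows up within time `log ((h + B) / (h - B)) / 2B`; as `h` exists on all of `(0, ∞)`, `h ≤ B`.
Applied to `t ↦ -h (-t)`, the same estimate shows that a value `h t < -B` forces a blow-down
within time `log ((h t - B) / (h t + B)) / 2B` before `t`; since `h` exists down to `0`, this
time is at least `t`, which is the lower bound `-B coth (B t) ≤ h t`.
-/

open Real Set Pointwise

def IsRiccatiSupersolOn (B : ℝ) (h h' : ℝ → ℝ) (s : Set ℝ) : Prop :=
  ∀ t ∈ s, HasDerivAt h (h' t) t ∧ h t ^ 2 - B ^ 2 ≤ h' t

namespace IsRiccatiSupersolOn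

variable {B : ℝ} {h h' : ℝ → ℝ} {s t : Set ℝ}

theorem mono (hs : IsRiccatiSupersolOn B h h' s) (hts : t ⊆ s) :
    IsRiccatiSupersolOn B h h' t :=
  fun x hx => hs x (hts hx)

theorem neg_comp_neg (hs : IsRiccatiSupersolOn B h h' s) :
    IsRiccatiSupersolOn B (fun x => -h (-x)) (fun x => h' (-x)) (-s) := by
  intro x hx
  obtain ⟨hderiv, hsup⟩ := hs (-x) hx
  refine ⟨?_, by simpa using hsup⟩
  simpa [Function.comp_def, Pi.neg_def] using (hderiv.comp x (hasDerivAt_neg' x)).neg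

theorem left_le_of_gt (hB : 0 ≤ B) {a b : ℝ} (hs : IsRiccatiSupersolOn B h h' (Icc a b))
    (ha : B < h a) : ∀ x ∈ Icc a b, h a ≤ h x := by
  have hcont : ContinuousOn h (Icc a b) :=
    fun x hx => (hs x hx).1.continuousAt.continuousWithinAt
  refine image_le_of_deriv_right_lt_deriv_boundary' continuousOn_const
    (fun x _ => hasDerivWithinAt_const x _ (h a)) le_rfl hcont
    (fun x hx => (hs x (Ico_subset_Icc_self hx)).1.hasDerivWithinAt) ?_
  intro x hx hx_eq
  have hsup := (hs x (Ico_subset_Icc_self hx)).2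
  -- at a contact point `h x = h a > B`, so `h' x ≥ h x ^ 2 - B ^ 2 > 0`
  nlinarith

theorem mul_exp_lt (hB : 0 < B) {a b : ℝ} (hab : a ≤ b)
    (hs : IsRiccatiSupersolOn B h h' (Icc a b)) (ha : B < h a) :
    (h a - B) * Real.exp (2 * B * (b - a)) < h a + B := by
  have hgt : ∀ x ∈ Icc a b, B < h x := fun x hx => ha.trans_le (hs.left_le_of_gt hB.le ha x hx)
  set φ : ℝ → ℝ := fun x => (h x - B) / (h x + B) * Real.exp (-(2 * B) * x)
  have hφ : ∀ x ∈ Icc a b, HasDerivAt φ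
      (2 * B * Real.exp (-(2 * B) * x) * (h' x - (h x ^ 2 - B ^ 2)) / (h x + B) ^ 2) x := by
    intro x hx
    have hpos : h x + B ≠ 0 := by linarith [hgt x hx]
    refine ((((hs x hx).1.sub_const B).div ((hs x hx).1.add_const B) hpos).mul
      ((hasDerivAt_id' x).const_mul (-(2 * B))).exp).congr_deriv ?_
    simp only [Pi.div_apply]
    field_simp
    ring
  have hmono : MonotoneOn φ (Icc a b) := by
    refine monotoneOn_of_hasDerivWithinAt_nonneg (convex_Icc a b)
      (fun x hx => (hφ x hx).continuousAt.continuousWithinAt)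
      (fun x hx => (hφ x (interior_subset hx)).hasDerivWithinAt) fun x hx => ?_
    exact div_nonneg (mul_nonneg (by positivity) (sub_nonneg.2 (hs x (interior_subset hx)).2))
      (sq_nonneg _)
  have hφb : φ b < Real.exp (-(2 * B) * b) := by
    have hq : (h b - B) / (h b + B) < 1 :=
      (div_lt_one (by linarith [hgt b (right_mem_Icc.2 hab)])).2 (by linarith)
    exact mul_lt_of_lt_one_left (Real.exp_pos _) hq
  have hφa : φ a ≤ φ b := hmono (left_mem_Icc.2 hab) (right_mem_Icc.2 hab) hab
  calc (h a - B) * Real.exp (2 * B * (b - a))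
      = (h a + B) * (φ a * Real.exp (2 * B * b)) := by
        rw [show 2 * B * (b - a) = -(2 * B) * a + 2 * B * b by ring, Real.exp_add]
        simp only [φ]
        field_simp [show h a + B ≠ 0 by linarith]
    _ < (h a + B) * (Real.exp (-(2 * B) * b) * Real.exp (2 * B * b)) := by
        gcongr
        · linarith
        · exact hφa.trans_lt hφb
    _ = h a + B := by rw [← Real.exp_add]; simp

theorem le_of_Ici (hB : 0 < B) {a : ℝ} (hs : IsRiccatiSupersolOn B h h' (Ici a)) : h a ≤ B := by
  by_contra! ha
  have hgap : 0 < h a - B := by linarith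
  have hlife := (hs.mono Icc_subset_Ici_self).mul_exp_lt (b := a + 1 / (h a - B)) hB
    (le_add_of_nonneg_right (by positivity)) ha
  rw [add_sub_cancel_left] at hlife
  have : h a + B ≤ (h a - B) * Real.exp (2 * B * (1 / (h a - B))) :=
    calc h a + B = (h a - B) * (2 * B * (1 / (h a - B)) + 1) := by
          field_simp
          ring
      _ ≤ (h a - B) * Real.exp (2 * B * (1 / (h a - B))) := by
          gcongr
          exact Real.add_one_le_exp _
  linarith

theorem neg_coth_le (hB : 0 < B) {a b : ℝ} (hab : a < b)
    (hs : IsRiccatiSupersolOn B h h' (Ioc a b)) :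
    -B * (Real.exp (2 * B * (b - a)) + 1) / (Real.exp (2 * B * (b - a)) - 1) ≤ h b := by
  set E := Real.exp (2 * B * (b - a))
  have hE : 1 < E := one_lt_exp_iff.2 (by nlinarith)
  rw [div_le_iff₀ (by linarith)]
  suffices (-h b - B) * E ≤ B - h b by linarith
  rcases le_or_gt (-B) (h b) with hle | hlt
  · nlinarith
  have hlife : ∀ s ∈ Ioo a b, (-h b - B) * Real.exp (2 * B * (b - s)) < B - h b := by
    intro s hs_mem
    have hsub : Icc (-b) (-s) ⊆ -Ioc a b := fun x hx => by
      rw [Set.mem_neg]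
      constructor <;> linarith [hx.1, hx.2, hs_mem.1]
    have hrefl := (hs.neg_comp_neg.mono hsub).mul_exp_lt hB (by linarith [hs_mem.2])
      (by simp only [neg_neg]; linarith)
    simp only [neg_neg] at hrefl
    convert hrefl using 3 <;> ring
  have hlim : Filter.Tendsto (fun s => (-h b - B) * Real.exp (2 * B * (b - s)))
      (nhdsWithin a (Ioi a)) (nhds ((-h b - B) * E)) :=
    ((by fun_prop : Continuous fun s => (-h b - B) * Real.exp (2 * B * (b - s))).tendsto
      a).mono_left nhdsWithin_le_nhds
  exact le_of_tendsto hlim (Filter.eventually_of_mem (Ioo_mem_nhdsGT hab)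
    fun s hs_mem => (hlife s hs_mem).le)

end IsRiccatiSupersolOn

theorem stmt4_general (B : ℝ) (hB : 0 < B) (K h : ℝ → ℝ)
    (hKB : ∀ t ∈ Ioi (0 : ℝ), K t ≥ -B ^ 2)
    (hh : ∀ t ∈ Ioi (0 : ℝ), HasDerivAt h (h t ^ 2 + K t) t) :
    ∀ t ∈ Ioi (0 : ℝ),
      -B * (Real.exp (2 * B * t) + 1) / (Real.exp (2 * B * t) - 1) ≤ h t ∧ h t ≤ B := by
  have hsup : IsRiccatiSupersolOn B h (fun t => h t ^ 2 + K t) (Ioi 0) :=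
    fun t ht => ⟨hh t ht, by linarith [hKB t ht]⟩
  intro t ht
  constructor
  · simpa using (hsup.mono Ioc_subset_Ioi_self).neg_coth_le hB ht
  · exact (hsup.mono (Ici_subset_Ioi.2 ht)).le_of_Ici hB

/-- If `h : (0,∞) → ℝ` is a globally defined `C¹` solution of `h' = h² + K` with
`K ≥ −B²`, `B > 0`, then `−B(e^{2Bt}+1)/(e^{2Bt}−1) ≤ h(t) ≤ B` for all `t > 0`. -/
theorem stmt4 (B : ℝ) (hB : 0 < B) (K h : ℝ → ℝ)
    (hK : ContinuousOn K (Ioi 0))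
    (hKB : ∀ t ∈ Ioi (0 : ℝ), K t ≥ -B ^ 2)
    (hh : ∀ t ∈ Ioi (0 : ℝ), HasDerivAt h (h t ^ 2 + K t) t)
    (hh' : ContinuousOn (fun t => h t ^ 2 + K t) (Ioi 0)) :
    ∀ t ∈ Ioi (0 : ℝ),
      -B * (Real.exp (2 * B * t) + 1) / (Real.exp (2 * B * t) - 1) ≤ h t ∧ h t ≤ B :=
  stmt4_general B hB K h hKB hh
end

section
/- Let B ≥ 0, let K : (0,∞) → ℝ be continuous with K(t) ≥ −B², and suppose h : (0,∞) → ℝ is C¹ with h' = h² + K and satisfies −B(e^{2Bt}+1)/(e^{2Bt}−1) ≤ h(t) ≤ B for all t > 0. Then for every 0 < a < b and every λ ≠ 1, ∫_a^b t^λ K(t) dt ≤ B(b^λ + a^λ (e^{2Ba}+1)/(e^{2Ba}−1)) + (λ²/(4(1−λ)))(a^{λ−1} − b^{λ−1}). -/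
open Real Set MeasureTheory intervalIntegral

/-!
Completing the square, `t^λ K = (t^λ h)' − t^λ (h + λ/(2t))² + (λ²/4) t^{λ−2}` along the Riccati
equation `h' = h² + K`. Dropping the square and integrating over `[a, b]` bounds `∫ t^λ K` by the
boundary term `b^λ h(b) − a^λ h(a)` plus `∫ (λ²/4) t^{λ−2}`; the two-sided bound on `h` then
controls the boundary term.
-/

lemma rpow_mul_add_div_sq {t : ℝ} (ht : 0 < t) (lam x : ℝ) :
    t ^ lam * (x + lam / (2 * t)) ^ 2 =
      t ^ lam * x ^ 2 + lam * t ^ (lam - 1) * x + lam ^ 2 / 4 * t ^ (lam - 2) := by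
  have h1 : t ^ (lam - 1) = t ^ lam / t := by rw [rpow_sub_one ht.ne']
  have h2 : t ^ (lam - 2) = t ^ lam / t ^ 2 := by
    rw [rpow_sub ht, rpow_two]
  rw [h1, h2]
  field_simp
  ring

lemma rpow_mul_le_of_completing_square {t : ℝ} (ht : 0 < t) (lam x k : ℝ) :
    t ^ lam * k ≤
      lam * t ^ (lam - 1) * x + t ^ lam * (x ^ 2 + k) + lam ^ 2 / 4 * t ^ (lam - 2) := by
  have := rpow_mul_add_div_sq ht lam x
  linarith [mul_nonneg (rpow_nonneg ht.le lam) (sq_nonneg (x + lam / (2 * t)))]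

lemma hasDerivAt_rpow_mul_sub_rpow {h : ℝ → ℝ} {h' t lam : ℝ} (ht : 0 < t) (hlam : lam ≠ 1)
    (hh : HasDerivAt h h' t) :
    HasDerivAt (fun s => s ^ lam * h s - lam ^ 2 / (4 * (1 - lam)) * s ^ (lam - 1))
      (lam * t ^ (lam - 1) * h t + t ^ lam * h' + lam ^ 2 / 4 * t ^ (lam - 2)) t := by
  have hpow : ∀ r : ℝ, HasDerivAt (fun s : ℝ => s ^ r) (r * t ^ (r - 1)) t :=
    fun r => hasDerivAt_rpow_const (Or.inl ht.ne')
  refine (((hpow lam).mul hh).sub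
    ((hpow (lam - 1)).const_mul (lam ^ 2 / (4 * (1 - lam))))).congr_deriv ?_
  have : 1 - lam ≠ 0 := sub_ne_zero.mpr (Ne.symm hlam)
  rw [show lam - 1 - 1 = lam - 2 by ring]
  field_simp
  ring

theorem integral_rpow_mul_le_of_hasDerivAt_sq_add {K h : ℝ → ℝ} {a b lam : ℝ} (hlam : lam ≠ 1)
    (ha : 0 < a) (hab : a ≤ b) (hK : ContinuousOn K (Icc a b))
    (hh : ∀ t ∈ Icc a b, HasDerivAt h (h t ^ 2 + K t) t) :
    ∫ t in a..b, t ^ lam * K t ≤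
      b ^ lam * h b - a ^ lam * h a +
        lam ^ 2 / (4 * (1 - lam)) * (a ^ (lam - 1) - b ^ (lam - 1)) := by
  have hpos : ∀ t ∈ Icc a b, 0 < t := fun t ht => ha.trans_le ht.1
  have hderiv := fun t ht => hasDerivAt_rpow_mul_sub_rpow (hpos t ht) hlam (hh t ht)
  have hint : IntegrableOn (fun t => t ^ lam * K t) (Icc a b) :=
    ((continuousOn_id.rpow_const fun t ht => Or.inl (hpos t ht).ne').mul hK).integrableOn_Icc
  have := integral_le_sub_of_hasDeriv_right_of_le hab
    (fun t ht => (hderiv t ht).continuousAt.continuousWithinAt)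
    (fun t ht => (hderiv t (Ioo_subset_Icc_self ht)).hasDerivWithinAt) hint
    (fun t ht => rpow_mul_le_of_completing_square (hpos t (Ioo_subset_Icc_self ht)) lam (h t) (K t))
  linarith

theorem stmt5_general (B lam : ℝ) (hlam : lam ≠ 1) (K h : ℝ → ℝ)
    (hK : ContinuousOn K (Ioi 0))
    (hh : ∀ t ∈ Ioi (0 : ℝ), HasDerivAt h (h t ^ 2 + K t) t)
    (hbound : ∀ t ∈ Ioi (0 : ℝ),
      -B * (Real.exp (2 * B * t) + 1) / (Real.exp (2 * B * t) - 1) ≤ h t ∧ h t ≤ B)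
    (a b : ℝ) (ha : 0 < a) (hab : a < b) :
    ∫ t in a..b, t ^ lam * K t ≤
      B * (b ^ lam + a ^ lam * (Real.exp (2 * B * a) + 1) / (Real.exp (2 * B * a) - 1)) +
        lam ^ 2 / (4 * (1 - lam)) * (a ^ (lam - 1) - b ^ (lam - 1)) := by
  have hsub : Icc a b ⊆ Ioi 0 := fun t ht => ha.trans_le ht.1
  have hb : 0 < b := ha.trans hab
  have hintegral := integral_rpow_mul_le_of_hasDerivAt_sq_add hlam ha hab.le (hK.mono hsub)
    fun t ht => hh t (hsub ht)
  have hupper := mul_le_mul_of_nonneg_left (hbound b hb).2 (rpow_nonneg hb.le lam)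
  have hlower := mul_le_mul_of_nonneg_left (hbound a ha).1 (rpow_nonneg ha.le lam)
  have hrw : a ^ lam * (-B * (Real.exp (2 * B * a) + 1) / (Real.exp (2 * B * a) - 1)) =
      -(B * (a ^ lam * (Real.exp (2 * B * a) + 1) / (Real.exp (2 * B * a) - 1))) := by ring
  linarith

/-- If `h` solves `h' = h² + K` on `(0,∞)` with `K ≥ −B²` and satisfies
`−B(e^{2Bt}+1)/(e^{2Bt}−1) ≤ h(t) ≤ B`, then for all `0 < a < b` and `λ ≠ 1`,
`∫_a^b t^λ K(t) dt ≤ B(b^λ + a^λ (e^{2Ba}+1)/(e^{2Ba}−1)) + (λ²/(4(1−λ)))(a^{λ−1} − b^{λ−1})`. -/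
theorem stmt5 (B lam : ℝ) (hB : 0 ≤ B) (hlam : lam ≠ 1) (K h : ℝ → ℝ)
    (hK : ContinuousOn K (Ioi 0))
    (hKB : ∀ t ∈ Ioi (0 : ℝ), K t ≥ -B ^ 2)
    (hh : ∀ t ∈ Ioi (0 : ℝ), HasDerivAt h (h t ^ 2 + K t) t)
    (hbound : ∀ t ∈ Ioi (0 : ℝ),
      -B * (Real.exp (2 * B * t) + 1) / (Real.exp (2 * B * t) - 1) ≤ h t ∧ h t ≤ B)
    (a b : ℝ) (ha : 0 < a) (hab : a < b) :
    ∫ t in a..b, t ^ lam * K t ≤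
      B * (b ^ lam + a ^ lam * (Real.exp (2 * B * a) + 1) / (Real.exp (2 * B * a) - 1)) +
        lam ^ 2 / (4 * (1 - lam)) * (a ^ (lam - 1) - b ^ (lam - 1)) :=
  stmt5_general B lam hlam K h hK hh hbound a b ha hab
end

section
/- Let K : (0,∞) → ℝ be continuous with K ≥ 0, and suppose h : (0,∞) → ℝ is C¹ with h'(t) = h(t)² + K(t) and 0 ≤ h(t) ≤ 1/t for all t > 0 (the limiting case B = 0 of the barrier estimate). Then for all 0 < a < b, ∫_a^b t K(t) dt ≤ 1 + (1/4) log(b/a). -/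
open Real Set MeasureTheory intervalIntegral

/-!
Integrating `(t h)' = h + t h² + t K` over `[a, b]` gives
`∫_a^b t K = b h(b) - a h(a) - ∫_a^b (h + t h²) ≤ b h(b) ≤ 1`, because `h ≥ 0` and `t h(t) ≤ 1`.
-/

section Riccati

variable {K h : ℝ → ℝ} {a b : ℝ}

theorem integral_id_mul_le_of_riccati (hab : a ≤ b) (ha : 0 ≤ a)
    (hK : ContinuousOn K (Icc a b))
    (hh : ∀ t ∈ Icc a b, HasDerivAt h (h t ^ 2 + K t) t)
    (hh0 : ∀ t ∈ Icc a b, 0 ≤ h t) :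
    ∫ t in a..b, t * K t ≤ b * h b - a * h a := by
  have hcont : ContinuousOn h (Icc a b) :=
    fun t ht => (hh t ht).continuousAt.continuousWithinAt
  have hint : IntervalIntegrable (fun t => h t + t * (h t ^ 2 + K t)) volume a b :=
    (hcont.add (continuousOn_id.mul ((hcont.pow 2).add hK))).intervalIntegrable_of_Icc hab
  have hftc : ∫ t in a..b, (h t + t * (h t ^ 2 + K t)) = b * h b - a * h a := by
    refine integral_eq_sub_of_hasDerivAt (f := fun t => t * h t) (fun t ht => ?_) hint
    rw [uIcc_of_le hab] at ht
    simpa using (hasDerivAt_id t).fun_mul (hh t ht)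
  rw [← hftc]
  refine integral_mono_on hab ((continuousOn_id.mul hK).intervalIntegrable_of_Icc hab) hint
    fun t ht => ?_
  have ht0 : 0 ≤ t := ha.trans ht.1
  nlinarith [hh0 t ht, mul_nonneg ht0 (sq_nonneg (h t))]

end Riccati

theorem stmt6_general (K h : ℝ → ℝ)
    (hK : ContinuousOn K (Ioi 0))
    (hh : ∀ t ∈ Ioi (0 : ℝ), HasDerivAt h (h t ^ 2 + K t) t)
    (hbound : ∀ t ∈ Ioi (0 : ℝ), 0 ≤ h t ∧ h t ≤ 1 / t)
    (a b : ℝ) (ha : 0 < a) (hab : a < b) :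
    ∫ t in a..b, t * K t ≤ 1 + (1 / 4) * Real.log (b / a) := by
  have hpos : Icc a b ⊆ Ioi 0 := fun t ht => ha.trans_le ht.1
  have hb : 0 < b := ha.trans hab
  have hbh : b * h b ≤ 1 := by
    calc b * h b ≤ b * (1 / b) := mul_le_mul_of_nonneg_left (hbound b hb).2 hb.le
      _ = 1 := by field_simp
  have hah : 0 ≤ a * h a := mul_nonneg ha.le (hbound a ha).1
  have hlog : 0 ≤ Real.log (b / a) := Real.log_nonneg ((one_le_div ha).mpr hab.le)
  calc ∫ t in a..b, t * K t ≤ b * h b - a * h a :=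
        integral_id_mul_le_of_riccati hab.le ha.le (hK.mono hpos)
          (fun t ht => hh t (hpos ht)) (fun t ht => (hbound t (hpos ht)).1)
    _ ≤ 1 + (1 / 4) * Real.log (b / a) := by linarith

/-- Limiting case `B = 0`: if `h' = h² + K` with `K ≥ 0` and `0 ≤ h(t) ≤ 1/t`, then
for all `0 < a < b`, `∫_a^b t K(t) dt ≤ 1 + (1/4) log(b/a)`. -/
theorem stmt6 (K h : ℝ → ℝ)
    (hK : ContinuousOn K (Ioi 0))
    (hK0 : ∀ t ∈ Ioi (0 : ℝ), 0 ≤ K t)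
    (hh : ∀ t ∈ Ioi (0 : ℝ), HasDerivAt h (h t ^ 2 + K t) t)
    (hbound : ∀ t ∈ Ioi (0 : ℝ), 0 ≤ h t ∧ h t ≤ 1 / t)
    (a b : ℝ) (ha : 0 < a) (hab : a < b) :
    ∫ t in a..b, t * K t ≤ 1 + (1 / 4) * Real.log (b / a) :=
  stmt6_general K h hK hh hbound a b ha hab
end

section
/- Let B > 0 and suppose u : [0,∞) → ℝ is a C² solution of u'' + K u = 0 with u(0) = 0, u'(0) > 0, K continuous with K(t) ≥ −B², and u(t) ≠ 0 for all t > 0. If furthermore for some 0 < a < b one has (1 − e^{−2Ba}) ∫_a^b K(t) dt > 2B, then a contradiction arises; i.e., no such nowhere-vanishing solution exists, so u must have a zero in (0,∞). -/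
/-!
Suppose `u` has no zero in `(0, ∞)`; then `u > 0` there and `w = u' / u` solves the Riccati
equation `w' = -K - w²`, so `∫_a^b K ≤ w(a) - w(b)`. Comparing `u` with `sinh (B t)` (the
Wronskian is antitone because `K ≥ -B²`) gives `w(a) ≤ B coth (B a)`, and `w(b) ≥ -B`, since
otherwise `u' + B u` stays below a negative constant on `[b, ∞)` and `u` is driven below zero.
Hence `(1 - e^{-2Ba}) ∫_a^b K ≤ (1 - e^{-2Ba}) B (coth (B a) + 1) = 2B`.
-/

open Real Set MeasureTheory intervalIntegral

theorem antitoneOn_of_hasDerivAt_nonpos {D : Set ℝ} (hD : Convex ℝ D) {f f' : ℝ → ℝ}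
    (hf : ∀ x ∈ D, HasDerivAt f (f' x) x) (hf' : ∀ x ∈ interior D, f' x ≤ 0) :
    AntitoneOn f D :=
  antitoneOn_of_hasDerivWithinAt_nonpos hD (fun x hx => (hf x hx).continuousAt.continuousWithinAt)
    (fun x hx => (hf x (interior_subset hx)).hasDerivWithinAt) hf'

theorem exists_gt_of_hasDerivWithinAt_Ioi_pos {u : ℝ → ℝ} {d x₀ : ℝ}
    (hd : HasDerivWithinAt u d (Ioi x₀) x₀) (hd₀ : 0 < d) : ∃ t ∈ Ioi x₀, u x₀ < u t := by
  have hslope := (hasDerivWithinAt_iff_tendsto_slope' self_notMem_Ioi).1 hd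
  obtain ⟨t, hpos, ht⟩ := ((hslope.eventually (lt_mem_nhds hd₀)).and self_mem_nhdsWithin).exists
  rw [slope_def_field] at hpos
  exact ⟨t, ht, sub_pos.1 ((div_pos_iff_of_pos_right (sub_pos.2 ht)).1 hpos)⟩

theorem pos_of_ne_zero_of_hasDerivWithinAt_Ioi_pos {u : ℝ → ℝ} {d x₀ : ℝ}
    (hcont : ContinuousOn u (Ioi x₀)) (hd : HasDerivWithinAt u d (Ioi x₀) x₀) (hd₀ : 0 < d)
    (hu₀ : u x₀ = 0) (hne : ∀ t ∈ Ioi x₀, u t ≠ 0) : ∀ t ∈ Ioi x₀, 0 < u t := by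
  obtain ⟨t₀, ht₀, hut₀⟩ := exists_gt_of_hasDerivWithinAt_Ioi_pos hd hd₀
  intro t ht
  by_contra! hle
  obtain ⟨c, hc, hc₀⟩ :=
    isPreconnected_Ioi.intermediate_value ht ht₀ hcont ⟨hle, hu₀ ▸ hut₀.le⟩
  exact hne c hc hc₀

theorem one_sub_exp_neg_two_mul_mul_cosh_div_sinh_add_one {x : ℝ} (hx : x ≠ 0) :
    (1 - exp (-(2 * x))) * (cosh x / sinh x + 1) = 2 := by
  have hs : sinh x ≠ 0 := by simpa using hx
  have hexp : exp x * exp (-x) = 1 := by rw [← exp_add, add_neg_cancel, exp_zero]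
  have h : 1 - exp (-(2 * x)) = 2 * sinh x * exp (-x) := by
    rw [sinh_eq, show -(2 * x) = -x + -x by ring, exp_add]
    linear_combination -hexp
  rw [h, div_add_one hs, cosh_add_sinh]
  field_simp
  linear_combination hexp

section LinearSecondOrderODE

variable {K u u' : ℝ → ℝ} {B : ℝ}

theorem div_le_mul_cosh_div_sinh_of_ode {a : ℝ} (hB : 0 < B) (ha : 0 < a)
    (hu : ∀ t ∈ Icc 0 a, HasDerivAt u (u' t) t)
    (hu' : ∀ t ∈ Icc 0 a, HasDerivAt u' (-(K t * u t)) t)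
    (hKB : ∀ t ∈ Icc 0 a, -B ^ 2 ≤ K t) (hpos : ∀ t ∈ Ioc 0 a, 0 < u t) (hu₀ : u 0 = 0) :
    u' a / u a ≤ B * (cosh (B * a) / sinh (B * a)) := by
  -- the Wronskian of `u` and `sinh (B ·)`, a solution of `v'' = B² v`
  set W : ℝ → ℝ := fun t => u' t * sinh (B * t) - u t * (B * cosh (B * t))
  have hW : ∀ t ∈ Icc 0 a, HasDerivAt W (-((K t + B ^ 2) * (u t * sinh (B * t)))) t := by
    intro t ht
    have hlin := (hasDerivAt_id t).const_mul B
    refine (((hu' t ht).mul hlin.sinh).sub ((hu t ht).mul (hlin.cosh.const_mul B))).congr_deriv ?_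
    simp only [id]
    ring
  have hanti : AntitoneOn W (Icc 0 a) := by
    refine antitoneOn_of_hasDerivAt_nonpos (convex_Icc 0 a) hW fun t ht => ?_
    rw [interior_Icc] at ht
    have hK : 0 ≤ K t + B ^ 2 := by linarith [hKB t (Ioo_subset_Icc_self ht)]
    have hsinh : 0 < sinh (B * t) := sinh_pos_iff.2 (mul_pos hB ht.1)
    have := mul_nonneg hK (mul_pos (hpos t (Ioo_subset_Ioc_self ht)) hsinh).le
    linarith
  have hWa : W a ≤ 0 := by
    simpa [W, hu₀] using hanti (left_mem_Icc.2 ha.le) (right_mem_Icc.2 ha.le) ha.le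
  have hua : 0 < u a := hpos a (right_mem_Ioc.2 ha)
  have hsinh : 0 < sinh (B * a) := sinh_pos_iff.2 (mul_pos hB ha)
  rw [← mul_div_assoc, div_le_div_iff₀ hua hsinh]
  linarith

theorem neg_le_div_of_ode {b : ℝ} (hB : 0 ≤ B)
    (hu : ∀ t ∈ Ici b, HasDerivAt u (u' t) t)
    (hu' : ∀ t ∈ Ici b, HasDerivAt u' (-(K t * u t)) t)
    (hKB : ∀ t ∈ Ici b, -B ^ 2 ≤ K t) (hpos : ∀ t ∈ Ici b, 0 < u t) :
    -B ≤ u' b / u b := by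
  rw [le_div_iff₀ (hpos b self_mem_Ici)]
  by_contra! hneg
  set c := -(u' b + B * u b)
  have hc₀ : 0 < c := by linarith
  have hanti : AntitoneOn (fun t => (u' t + B * u t) * exp (-(B * (t - b)))) (Ici b) := by
    refine antitoneOn_of_hasDerivAt_nonpos (convex_Ici b)
      (f' := fun t => -((K t + B ^ 2) * u t * exp (-(B * (t - b)))))
      (fun t ht => ?_) fun t ht => ?_
    · have hexp := (((hasDerivAt_id t).sub_const b).const_mul B).neg.exp
      refine (((hu' t ht).add ((hu t ht).const_mul B)).mul hexp).congr_deriv ?_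
      simp only [id, Pi.neg_apply, Pi.add_apply]
      ring
    · rw [interior_Ici] at ht
      have hK : 0 ≤ K t + B ^ 2 := by linarith [hKB t (Ioi_subset_Ici_self ht)]
      have := mul_nonneg (mul_nonneg hK (hpos t (Ioi_subset_Ici_self ht)).le)
        (exp_pos (-(B * (t - b)))).le
      linarith
  -- `u' + B u ≤ -c e^{B (t - b)} ≤ -c`, and `B u ≥ 0`
  have hu'_le : ∀ t ∈ Ici b, u' t ≤ -c := by
    intro t ht
    have h := hanti self_mem_Ici ht ht
    simp only [sub_self, mul_zero, neg_zero, exp_zero, mul_one] at h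
    have hE : exp (-(B * (t - b))) ≤ 1 :=
      exp_le_one_iff.2 (neg_nonpos.2 (mul_nonneg hB (sub_nonneg.2 ht)))
    have hBu := mul_nonneg hB (hpos t ht).le
    nlinarith [exp_pos (-(B * (t - b)))]
  have hlin : AntitoneOn (fun t => u t + c * t) (Ici b) := by
    refine antitoneOn_of_hasDerivAt_nonpos (convex_Ici b)
      (fun t ht => (hu t ht).add ((hasDerivAt_id t).const_mul c)) fun t ht => ?_
    rw [interior_Ici] at ht
    linarith [hu'_le t (Ioi_subset_Ici_self ht)]
  have hT : b ≤ b + u b / c := le_add_of_nonneg_right (div_pos (hpos b self_mem_Ici) hc₀).le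
  have h := hlin self_mem_Ici hT hT
  simp only [mul_add, mul_div_cancel₀ _ hc₀.ne'] at h
  linarith [hpos _ hT]

theorem integral_le_div_sub_div_of_ode {a b : ℝ} (hab : a ≤ b)
    (hu : ∀ t ∈ Icc a b, HasDerivAt u (u' t) t)
    (hu' : ∀ t ∈ Icc a b, HasDerivAt u' (-(K t * u t)) t)
    (hK : ContinuousOn K (Icc a b)) (hpos : ∀ t ∈ Icc a b, 0 < u t) :
    ∫ t in a..b, K t ≤ u' a / u a - u' b / u b := by
  -- `w = u' / u` solves the Riccati equation `w' = -K - w²`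
  have hw : ∀ t ∈ Icc a b,
      HasDerivAt (fun s => -(u' s / u s)) (K t + (u' t / u t) ^ 2) t := by
    intro t ht
    have hne := (hpos t ht).ne'
    refine ((hu' t ht).div (hu t ht) hne).neg.congr_deriv ?_
    field_simp
    ring
  have h := integral_le_sub_of_hasDeriv_right_of_le hab
    (fun t ht => (hw t ht).continuousAt.continuousWithinAt)
    (fun t ht => (hw t (Ioo_subset_Icc_self ht)).hasDerivWithinAt) hK.integrableOn_Icc
    (fun t _ => le_add_of_nonneg_right (sq_nonneg _))
  linarith

end LinearSecondOrderODE

/-- If `u` is a `C²` solution of `u'' + K u = 0` on `[0,∞)` with `u(0) = 0`, `u'(0) > 0`,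
`K ≥ −B²` with `B > 0`, and `(1 − e^{−2Ba}) ∫_a^b K > 2B` for some `0 < a < b`,
then `u` must vanish somewhere in `(0,∞)`. -/
theorem stmt8 (B : ℝ) (hB : 0 < B) (K u u' : ℝ → ℝ)
    (hK : ContinuousOn K (Ici 0))
    (hKB : ∀ t ∈ Ici (0 : ℝ), K t ≥ -B ^ 2)
    (hu : ∀ t ∈ Ici (0 : ℝ), HasDerivAt u (u' t) t)
    (hu' : ∀ t ∈ Ici (0 : ℝ), HasDerivAt u' (-(K t * u t)) t)
    (hu0 : u 0 = 0) (hu'0 : 0 < u' 0)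
    (a b : ℝ) (ha : 0 < a) (hab : a < b)
    (hint : (1 - Real.exp (-(2 * B * a))) * ∫ t in a..b, K t > 2 * B) :
    ∃ t ∈ Ioi (0 : ℝ), u t = 0 := by
  by_contra! hne
  have hpos : ∀ t ∈ Ioi (0 : ℝ), 0 < u t :=
    pos_of_ne_zero_of_hasDerivWithinAt_Ioi_pos
      (fun t ht => (hu t (Ioi_subset_Ici_self ht)).continuousAt.continuousWithinAt)
      (hu 0 self_mem_Ici).hasDerivWithinAt hu'0 hu0 hne
  have hb : 0 < b := ha.trans hab
  have hupper := div_le_mul_cosh_div_sinh_of_ode hB ha (fun t ht => hu t ht.1)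
    (fun t ht => hu' t ht.1) (fun t ht => hKB t ht.1) (fun t ht => hpos t ht.1) hu0
  have hlower := neg_le_div_of_ode hB.le (fun t ht => hu t (hb.le.trans ht))
    (fun t ht => hu' t (hb.le.trans ht)) (fun t ht => hKB t (hb.le.trans ht))
    (fun t ht => hpos t (hb.trans_le ht))
  have hriccati := integral_le_div_sub_div_of_ode hab.le (fun t ht => hu t (ha.le.trans ht.1))
    (fun t ht => hu' t (ha.le.trans ht.1)) (hK.mono fun t ht => ha.le.trans ht.1)
    (fun t ht => hpos t (ha.trans_le ht.1))
  have hfactor : 0 < 1 - exp (-(2 * B * a)) :=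
    sub_pos.2 (exp_lt_one_iff.2 (by nlinarith))
  have hcoth := one_sub_exp_neg_two_mul_mul_cosh_div_sinh_add_one (mul_pos hB ha).ne'
  have : (1 - exp (-(2 * B * a))) * ∫ t in a..b, K t ≤ 2 * B :=
    calc (1 - exp (-(2 * B * a))) * ∫ t in a..b, K t
        ≤ (1 - exp (-(2 * B * a))) * (B * (cosh (B * a) / sinh (B * a) + 1)) :=
          mul_le_mul_of_nonneg_left (by linarith) hfactor.le
      _ = 2 * B := by
          rw [show 2 * B * a = 2 * (B * a) by ring]
          linear_combination B * hcoth
  linarith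
end

section
/- Oscillation criterion (convergent case): with v, W, B, z as above and v^{-1} ∈ L¹(+∞), if for some R > 0 one has limsup_{t→∞} [∫_R^t W(s)v(s) ds · ∫_t^∞ ds/v(s)] > 1, then z is oscillatory. -/
/-!
Suppose `z` has no zero beyond `T`. Then `w = -v z' / z` satisfies the Riccati equation
`w' = W v + w² / v ≥ (w² - B²) / v`. Put `A t = ∫_t^∞ 1/v`, which decreases to `0`.
If `w A > 1 + ε` at some late time, then `w > B` there, so `w` keeps increasing, and
`(1/w)' ≤ -(1 - η)/v` with `η` small: `1/w` falls faster than `(1 - η) A`, and since it started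
below `(1 - η) A` it would become negative. Hence `limsup w A ≤ 1`. Finally
`∫_R^t W v ≤ C + w t`, because the neglected term `w² / v` is nonnegative, so
`limsup (∫_R^t W v) A ≤ 1`.
-/

open Real Set Filter MeasureTheory intervalIntegral Topology

/-- Unlike `Filter.limsup_le_of_le`, no coboundedness is needed: a real `limsup` that is not
bounded below takes the junk value `0`. -/
lemma Real.limsup_le_of_eventually_le {α : Type*} {l : Filter α} {u : α → ℝ} {a : ℝ}
    (ha : 0 ≤ a) (h : ∀ᶠ x in l, u x ≤ a) : limsup u l ≤ a := by
  rw [limsup_eq]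
  by_cases hb : BddBelow {b | ∀ᶠ x in l, u x ≤ b}
  · exact csInf_le hb h
  · rw [Real.sInf_of_not_bddBelow hb]
    exact ha

lemma tendsto_integral_Ioi_atTop_zero {p : ℝ → ℝ} {a : ℝ} (hp : IntegrableOn p (Ioi a)) :
    Tendsto (fun t => ∫ s in Ioi t, p s) atTop (𝓝 0) := by
  have h := tendsto_const_nhds (x := ∫ s in Ioi a, p s) |>.sub
    (intervalIntegral_tendsto_integral_Ioi a hp tendsto_id)
  rw [sub_self] at h
  refine h.congr' ?_
  filter_upwards [eventually_ge_atTop a] with t ht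
  rw [id, ← integral_Ioi_sub_Ioi hp ht, sub_sub_cancel]

lemma monotoneOn_Ici_of_hasDerivAt_nonneg_above {f f' : ℝ → ℝ} {a d : ℝ}
    (hf : ∀ t ≥ a, HasDerivAt f (f' t) t) (hd : d < f a)
    (hf' : ∀ t ≥ a, d < f t → 0 ≤ f' t) : MonotoneOn f (Ici a) := by
  have hcont : ContinuousOn f (Ici a) := fun t ht => (hf t ht).continuousAt.continuousWithinAt
  have mono (D : Set ℝ) (hD : D ⊆ Ici a) (hconv : Convex ℝ D)
      (hdf : ∀ t ∈ interior D, d < f t) : MonotoneOn f D :=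
    monotoneOn_of_hasDerivWithinAt_nonneg hconv (hcont.mono hD)
      (fun t ht => (hf t (hD (interior_subset ht))).hasDerivWithinAt)
      (fun t ht => hf' t (hD (interior_subset ht)) (hdf t ht))
  refine mono _ subset_rfl (convex_Ici a) fun t ht => ?_
  by_contra! hfail
  -- `sInf S` is the first time `f` drops to `d`; up to it `f` is nondecreasing, yet `d < f a`.
  set S := Ici a ∩ f ⁻¹' Iic d
  have hS : IsClosed S := hcont.preimage_isClosed_of_isClosed isClosed_Ici isClosed_Iic
  obtain ⟨has, hsd⟩ : sInf S ∈ S :=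
    hS.csInf_mem ⟨t, interior_subset ht, hfail⟩ ⟨a, fun x hx => hx.1⟩
  have hmono : MonotoneOn f (Icc a (sInf S)) := by
    refine mono _ Icc_subset_Ici_self (convex_Icc _ _) fun x hx => ?_
    rw [interior_Icc] at hx
    by_contra! hxd
    exact hx.2.not_ge (csInf_le ⟨a, fun y hy => hy.1⟩ ⟨hx.1.le, hxd⟩)
  exact (hd.trans_le (hmono ⟨le_rfl, has⟩ ⟨has, le_rfl⟩ has)).not_ge hsd

lemma inv_sub_inv_le_of_riccati {p w w' : ℝ → ℝ} {a b B c η : ℝ} (hab : a ≤ b)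
    (hp : ∀ t ∈ Icc a b, 0 ≤ p t) (hpint : IntegrableOn p (Icc a b))
    (hw : ∀ t ∈ Icc a b, HasDerivAt w (w' t) t)
    (hric : ∀ t ∈ Icc a b, (w t ^ 2 - B ^ 2) * p t ≤ w' t)
    (hc : 0 < c) (hwc : ∀ t ∈ Icc a b, c ≤ w t) (hBc : B ^ 2 ≤ η * c ^ 2) :
    (w b)⁻¹ - (w a)⁻¹ ≤ -(1 - η) * ∫ t in a..b, p t := by
  have hw0 : ∀ t ∈ Icc a b, w t ≠ 0 := fun t ht => (hc.trans_le (hwc t ht)).ne'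
  rw [← intervalIntegral.integral_const_mul]
  refine sub_le_integral_of_hasDeriv_right_of_le hab
    (fun t ht => ((hw t ht).continuousAt.inv₀ (hw0 t ht)).continuousWithinAt)
    (fun t ht => ((hw t (Ioo_subset_Icc_self ht)).inv
      (hw0 t (Ioo_subset_Icc_self ht))).hasDerivWithinAt)
    (hpint.const_mul _) fun t ht => ?_
  replace ht := Ioo_subset_Icc_self ht
  have hwt : 0 < w t := hc.trans_le (hwc t ht)
  have hη : 0 ≤ η := by nlinarith [sq_nonneg B, pow_pos hc 2]
  have hBw : B ^ 2 ≤ η * w t ^ 2 := hBc.trans (by gcongr; exact hwc t ht)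
  have : (1 - η) * p t * w t ^ 2 ≤ w' t := by nlinarith [hric t ht, hp t ht]
  rwa [neg_div, neg_mul, neg_le_neg_iff, le_div_iff₀ (by positivity)]

lemma one_sub_mul_integral_Ioi_le_inv_of_riccati {p w w' : ℝ → ℝ} {a B η t₁ : ℝ}
    (hB : 0 ≤ B) (hp : ∀ t ≥ a, 0 ≤ p t) (hpint : IntegrableOn p (Ioi a))
    (hw : ∀ t ≥ a, HasDerivAt w (w' t) t) (hric : ∀ t ≥ a, (w t ^ 2 - B ^ 2) * p t ≤ w' t)
    (ht₁ : a < t₁) (hBw : B < w t₁) (hBη : B ^ 2 ≤ η * w t₁ ^ 2) :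
    (1 - η) * ∫ s in Ioi t₁, p s ≤ (w t₁)⁻¹ := by
  set A : ℝ → ℝ := fun t => ∫ s in Ioi t, p s
  by_contra! hstart
  have hw₁ : 0 < w t₁ := hB.trans_lt hBw
  have hmono : MonotoneOn w (Ici t₁) :=
    monotoneOn_Ici_of_hasDerivAt_nonneg_above (fun t ht => hw t (ht₁.le.trans ht)) hBw
      fun t ht hBt => (mul_nonneg (by nlinarith) (hp t (ht₁.le.trans ht))).trans
        (hric t (ht₁.le.trans ht))
  have hinv : ∀ s ≥ t₁, (w s)⁻¹ ≤ (w t₁)⁻¹ - (1 - η) * (A t₁ - A s) := by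
    intro s hs
    have hsub : Icc t₁ s ⊆ Ioi a := fun t ht => ht₁.trans_le ht.1
    have := inv_sub_inv_le_of_riccati hs (fun t ht => hp t (hsub ht).le) (hpint.mono_set hsub)
      (fun t ht => hw t (hsub ht).le) (fun t ht => hric t (hsub ht).le) hw₁
      (fun t ht => hmono self_mem_Ici ht.1 ht.1) hBη
    rw [← integral_Ioi_sub_Ioi (hpint.mono_set (Ioi_subset_Ioi ht₁.le)) hs] at this
    linarith
  have hAη : Tendsto (fun t => (1 - η) * A t) atTop (𝓝 0) := by
    simpa using (tendsto_integral_Ioi_atTop_zero hpint).const_mul (1 - η)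
  obtain ⟨s, hAs, hs⟩ :=
    ((hAη.eventually_lt_const (sub_pos.2 hstart)).and (eventually_ge_atTop t₁)).exists
  have := inv_pos.2 (hw₁.trans_le (hmono self_mem_Ici hs hs))
  linarith [hinv s hs]

theorem eventually_mul_integral_Ioi_le_of_riccati {p w w' : ℝ → ℝ} {a B : ℝ} (hB : 0 ≤ B)
    (hp : ∀ t ≥ a, 0 ≤ p t) (hpint : IntegrableOn p (Ioi a))
    (hw : ∀ t ≥ a, HasDerivAt w (w' t) t) (hric : ∀ t ≥ a, (w t ^ 2 - B ^ 2) * p t ≤ w' t)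
    {ε : ℝ} (hε : 0 < ε) : ∀ᶠ t in atTop, w t * ∫ s in Ioi t, p s ≤ 1 + ε := by
  set A : ℝ → ℝ := fun t => ∫ s in Ioi t, p s
  set η := ε / (1 + ε)
  have hη : 0 < η := by positivity
  have hη1 : η < 1 := by rw [div_lt_one (by positivity)]; linarith
  have hη' : (1 - η) * (1 + ε) = 1 := by
    rw [sub_mul, one_mul, div_mul_cancel₀ _ (by positivity)]; ring
  have hBA : ∀ᶠ t in atTop, (B * A t) ^ 2 < η := by
    refine ((tendsto_integral_Ioi_atTop_zero hpint |>.const_mul B).pow 2).eventually_lt_const ?_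
    simpa using hη
  by_contra hfreq
  simp only [not_eventually, not_le] at hfreq
  obtain ⟨t₁, hwA, hBA₁, ht₁⟩ :=
    (hfreq.and_eventually (hBA.and (eventually_gt_atTop a))).exists
  change 1 + ε < w t₁ * A t₁ at hwA
  have hA₁ : 0 ≤ A t₁ := setIntegral_nonneg measurableSet_Ioi fun s hs =>
    hp s (ht₁.trans hs).le
  have hBw : B < w t₁ := by
    by_contra! h
    nlinarith [mul_le_mul_of_nonneg_right h hA₁, mul_nonneg hB hA₁]
  have hBη : B ^ 2 ≤ η * w t₁ ^ 2 := by
    by_contra! h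
    have : 1 < (w t₁ * A t₁) ^ 2 := by nlinarith
    nlinarith [mul_le_mul_of_nonneg_right h.le (sq_nonneg (A t₁))]
  have hw₁ : 0 < w t₁ := hB.trans_lt hBw
  have := mul_le_mul_of_nonneg_right
    (one_sub_mul_integral_Ioi_le_inv_of_riccati hB hp hpint hw hric ht₁ hBw hBη) hw₁.le
  rw [inv_mul_cancel₀ hw₁.ne'] at this
  nlinarith

lemma limsup_integral_mul_le_one {f w w' A : ℝ → ℝ} {a : ℝ} (R : ℝ)
    (hw : ∀ t ≥ a, HasDerivAt w (w' t) t) (hf : ∀ t ≥ a, f t ≤ w' t)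
    (hA : ∀ᶠ t in atTop, 0 ≤ A t) (hA0 : Tendsto A atTop (𝓝 0))
    (hwA : ∀ ε > 0, ∀ᶠ t in atTop, w t * A t ≤ 1 + ε) :
    limsup (fun t => (∫ s in R..t, f s) * A t) atTop ≤ 1 := by
  refine le_of_forall_pos_le_add fun ε hε => Real.limsup_le_of_eventually_le (by linarith) ?_
  set b := max a R
  set C := (∫ s in R..b, f s) - w b
  have hCA : Tendsto (fun t => C * A t) atTop (𝓝 0) := by simpa using hA0.const_mul C
  filter_upwards [hwA (ε / 2) (half_pos hε), hA, hCA.eventually_lt_const (half_pos hε),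
    eventually_ge_atTop b] with t hwAt hAt hCAt hbt
  by_cases hint : IntervalIntegrable f volume R t
  · have hb : b ∈ uIcc R t := mem_uIcc_of_le (le_max_right a R) hbt
    have hint' := hint.mono_set (uIcc_subset_uIcc_right hb)
    have hfint : IntegrableOn f (Icc b t) :=
      (intervalIntegrable_iff_integrableOn_Icc_of_le hbt).1 hint'
    have hbound : ∫ s in R..t, f s ≤ C + w t := by
      rw [← integral_add_adjacent_intervals (hint.mono_set (uIcc_subset_uIcc_left hb)) hint']
      have := integral_le_sub_of_hasDeriv_right_of_le hbt
        (fun s hs => (hw s ((le_max_left a R).trans hs.1)).continuousAt.continuousWithinAt)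
        (fun s hs => (hw s ((le_max_left a R).trans hs.1.le)).hasDerivWithinAt) hfint
        (fun s hs => hf s ((le_max_left a R).trans hs.1.le))
      linarith
    calc (∫ s in R..t, f s) * A t ≤ (C + w t) * A t := mul_le_mul_of_nonneg_right hbound hAt
      _ = C * A t + w t * A t := by ring
      _ ≤ 1 + ε := by linarith
  · rw [integral_undef hint, zero_mul]
    linarith

/-- Also valid where `v t = 0`: there `w t = 0` and, since `x / 0 = 0`, both sides equal `q`. -/
lemma hasDerivAt_riccati {v z z' : ℝ → ℝ} {q t : ℝ} (hz : HasDerivAt z (z' t) t)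
    (hvz : HasDerivAt (fun s => v s * z' s) (-(q * z t)) t) (hzt : z t ≠ 0) :
    HasDerivAt (fun s => -(v s * z' s) / z s) (q + (-(v t * z' t) / z t) ^ 2 / v t) t := by
  refine (hvz.fun_neg.fun_div hz hzt).congr_deriv ?_
  rcases eq_or_ne (v t) 0 with hv | hv
  · rw [hv, div_zero, add_zero]
    field_simp
    ring
  · field_simp
    ring

lemma riccati_lower_bound {B V W x : ℝ} (hV : 0 ≤ V) (hW : W ≥ -B ^ 2 / V ^ 2) :
    (x ^ 2 - B ^ 2) * (1 / V) ≤ W * V + x ^ 2 / V := by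
  rcases hV.eq_or_lt with rfl | hV
  · simp
  · calc (x ^ 2 - B ^ 2) * (1 / V) = -B ^ 2 / V ^ 2 * V + x ^ 2 / V := by
          field_simp
          ring
      _ ≤ W * V + x ^ 2 / V := by gcongr

theorem stmt14_general (B : ℝ) (hB : 0 ≤ B) (v W z z' : ℝ → ℝ)
    (hv0 : ∀ t ∈ Ici (0 : ℝ), 0 ≤ v t)
    (hvL1inf : ∀ t > (0 : ℝ), MeasureTheory.IntegrableOn (fun s => 1 / v s) (Ioi t))
    (hW : ∀ t ∈ Ioi (0 : ℝ), W t ≥ -B ^ 2 / (v t) ^ 2)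
    (hz' : ∀ t ∈ Ioi (0 : ℝ), HasDerivAt z (z' t) t)
    (heq : ∀ t ∈ Ioi (0 : ℝ), HasDerivAt (fun s => v s * z' s) (-(W t * v t * z t)) t)
    (R : ℝ)
    (hosc : 1 < Filter.limsup
      (fun t => (∫ s in R..t, W s * v s) * ∫ s in Ioi t, 1 / v s) atTop) :
    ∀ T > (0 : ℝ), ∃ t > T, z t = 0 := by
  intro T hT
  by_contra! hz
  set w : ℝ → ℝ := fun t => -(v t * z' t) / z t
  have hpos : ∀ t ≥ T + 1, 0 < t := fun t ht => by linarith
  have hw : ∀ t ≥ T + 1, HasDerivAt w (W t * v t + w t ^ 2 / v t) t := fun t ht =>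
    hasDerivAt_riccati (hz' t (hpos t ht)) (heq t (hpos t ht)) (hz t (by linarith))
  have hint := hvL1inf (T + 1) (hpos _ le_rfl)
  have hwA : ∀ ε > 0, ∀ᶠ t in atTop, w t * ∫ s in Ioi t, 1 / v s ≤ 1 + ε :=
    fun ε hε => eventually_mul_integral_Ioi_le_of_riccati hB
      (fun t ht => one_div_nonneg.2 (hv0 t (hpos t ht).le)) hint hw
      (fun t ht => riccati_lower_bound (hv0 t (hpos t ht).le) (hW t (hpos t ht))) hε
  have hA : ∀ᶠ t in atTop, 0 ≤ ∫ s in Ioi t, 1 / v s := by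
    filter_upwards [eventually_ge_atTop 0] with t ht
    exact setIntegral_nonneg measurableSet_Ioi fun s hs =>
      one_div_nonneg.2 (hv0 s (ht.trans hs.le))
  have := limsup_integral_mul_le_one R hw
    (fun t ht => le_add_of_nonneg_right <| div_nonneg (sq_nonneg _) (hv0 t (hpos t ht).le))
    hA (tendsto_integral_Ioi_atTop_zero hint) hwA
  linarith

/-- Oscillation criterion, convergent case `1/v ∈ L¹(+∞)`: if for some `R > 0`
`limsup_{t→∞} (∫_R^t W v) · (∫_t^∞ ds/v) > 1`, then `z` is oscillatory: it has a zero
beyond every `T > 0`. -/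
theorem stmt14 (B : ℝ) (hB : 0 ≤ B) (v W z z' : ℝ → ℝ) (z₀ : ℝ)
    (hv0 : ∀ t ∈ Ici (0 : ℝ), 0 ≤ v t)
    (hvloc : ∀ r > (0 : ℝ), BddAbove (v '' Icc 0 r))
    (hWloc : ∀ r > (0 : ℝ), BddAbove ((fun t => |W t|) '' Icc 0 r))
    (hvinvloc : ∀ a b : ℝ, 0 < a → a ≤ b → BddAbove ((fun t => 1 / v t) '' Icc a b))
    (hvnotL1zero : ¬ IntervalIntegrable (fun t => 1 / v t) MeasureTheory.volume 0 1)
    (hvL1inf : ∀ t > (0 : ℝ), MeasureTheory.IntegrableOn (fun s => 1 / v s) (Ioi t))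
    (hvlim : Tendsto v (nhdsWithin 0 (Ioi 0)) (nhds 0))
    (hW : ∀ t ∈ Ioi (0 : ℝ), W t ≥ -B ^ 2 / (v t) ^ 2)
    (hzlip : LocallyLipschitzOn (Ici 0) z)
    (hz' : ∀ t ∈ Ioi (0 : ℝ), HasDerivAt z (z' t) t)
    (heq : ∀ t ∈ Ioi (0 : ℝ), HasDerivAt (fun s => v s * z' s) (-(W t * v t * z t)) t)
    (hz'bdd : ∃ C δ : ℝ, 0 < δ ∧ ∀ t ∈ Ioo (0 : ℝ) δ, |z' t| ≤ C)
    (hz0 : Tendsto z (nhdsWithin 0 (Ioi 0)) (nhds z₀)) (hz₀pos : 0 < z₀)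
    (R : ℝ) (hR : 0 < R)
    (hosc : 1 < Filter.limsup
      (fun t => (∫ s in R..t, W s * v s) * ∫ s in Ioi t, 1 / v s) atTop) :
    ∀ T > (0 : ℝ), ∃ t > T, z t = 0 :=
  stmt14_general B hB v W z z' hv0 hvL1inf hW hz' heq R hosc
end
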